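/- Let J be a finite set, Ĩ ⊆ J, n_j a nonnegative integer with n_j ≤ |J \ Ĩ|, and ξ : J → ℝ. Then the average over all subsets I_j ⊆ J \ Ĩ of size n_j of ∏_{i ∈ I_j} cos(2jπξ_i) equals Σ_{U ⊆ J \ Ĩ} kr_{n_j}^{(|J \ Ĩ|)}(|U|) · ∏_{i ∈ (J\Ĩ)\U} cos²(jπξ_i) · ∏_{i ∈ U} sin²(jπξ_i), where j ∈ ℕ is fixed. -/

import Mathlib

open Finset Real

/-- The `k`-th Krawtchouk polynomial:
`kr n k x = (1/C(n,k)) * ∑_{t=0}^{k} (-1)^t C(x,t) C(n-x,k-t)`. -/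
noncomputable def kr (n k x : ℕ) : ℝ :=
  (1 / (n.choose k : ℝ)) *
    ∑ t ∈ Finset.range (k + 1), (-1 : ℝ) ^ t * (x.choose t : ℝ) * ((n - x).choose (k - t) : ℝ)

lemma fiber_card_aux {α : Type*} [DecidableEq α] (S U : Finset α) (hU : U ⊆ S)
    (nj t : ℕ) (ht : t ≤ nj) :
    ((Finset.powersetCard nj S).filter (fun I => (I ∩ U).card = t)).card
      = U.card.choose t * (S \ U).card.choose (nj - t) := by
  rw [← Finset.card_powersetCard, ← Finset.card_powersetCard, ← Finset.card_product]
  apply Finset.card_nbij' (fun I => (I ∩ U, I \ U)) (fun p => p.1 ∪ p.2)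
  · intro I hI
    simp only [Finset.mem_coe, Finset.mem_filter, Finset.mem_powersetCard] at hI
    obtain ⟨⟨hIS, hIc⟩, hIt⟩ := hI
    simp only [Finset.mem_coe, Finset.mem_product, Finset.mem_powersetCard]
    refine ⟨⟨Finset.inter_subset_right, hIt⟩, ?_, ?_⟩
    · intro x hx
      simp only [Finset.mem_sdiff] at hx ⊢
      exact ⟨hIS hx.1, hx.2⟩
    · have h := Finset.card_inter_add_card_sdiff I U
      omega
  · intro p hp
    simp only [Finset.mem_coe, Finset.mem_product, Finset.mem_powersetCard] at hp
    obtain ⟨⟨hA, hAc⟩, hB, hBc⟩ := hp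
    have hBU : Disjoint p.2 U := by
      refine Finset.disjoint_left.2 fun x hx hxU => ?_
      exact (Finset.mem_sdiff.1 (hB hx)).2 hxU
    simp only [Finset.mem_coe, Finset.mem_filter, Finset.mem_powersetCard]
    refine ⟨⟨Finset.union_subset (hA.trans hU) (hB.trans Finset.sdiff_subset), ?_⟩, ?_⟩
    · rw [Finset.card_union_of_disjoint (Finset.disjoint_of_subset_left hA hBU.symm)]
      omega
    · rw [Finset.union_inter_distrib_right, Finset.inter_eq_left.2 hA,
        Finset.disjoint_iff_inter_eq_empty.1 hBU, Finset.union_empty, hAc]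
  · intro I hI
    ext x
    simp only [Finset.mem_union, Finset.mem_inter, Finset.mem_sdiff]
    tauto
  · intro p hp
    simp only [Finset.mem_coe, Finset.mem_product, Finset.mem_powersetCard] at hp
    obtain ⟨⟨hA, hAc⟩, hB, hBc⟩ := hp
    have hBU : p.2 ∩ U = ∅ := by
      refine Finset.eq_empty_of_forall_notMem fun x hx => ?_
      have := Finset.mem_inter.1 hx
      exact (Finset.mem_sdiff.1 (hB this.1)).2 this.2
    have h1 : (p.1 ∪ p.2) ∩ U = p.1 := by
      rw [Finset.union_inter_distrib_right, Finset.inter_eq_left.2 hA, hBU,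
        Finset.union_empty]
    have h2 : (p.1 ∪ p.2) \ U = p.2 := by
      rw [Finset.union_sdiff_distrib, Finset.sdiff_eq_empty_iff_subset.2 hA,
        Finset.empty_union, Finset.sdiff_eq_self_iff_disjoint.2 ?_]
      exact Finset.disjoint_left.2 fun x hx hxU =>
        (Finset.mem_sdiff.1 (hB hx)).2 hxU
    dsimp only
    rw [h1, h2]

lemma sum_sign_aux {α : Type*} [DecidableEq α] (S U : Finset α) (hU : U ⊆ S) (nj : ℕ) :
    ∑ I ∈ Finset.powersetCard nj S, (-1 : ℝ) ^ (U ∩ I).card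
      = ∑ t ∈ Finset.range (nj + 1),
          (-1 : ℝ) ^ t * (U.card.choose t : ℝ) * ((S.card - U.card).choose (nj - t) : ℝ) := by
  rw [← Finset.sum_fiberwise_of_maps_to (g := fun I => (I ∩ U).card)
      (t := Finset.range (nj + 1)) ?_ (fun I => (-1 : ℝ) ^ (U ∩ I).card)]
  · refine Finset.sum_congr rfl fun t ht => ?_
    have ht' : t ≤ nj := Nat.lt_succ_iff.1 (Finset.mem_range.1 ht)
    have : ∀ I ∈ (Finset.powersetCard nj S).filter (fun I => (I ∩ U).card = t),
        (-1 : ℝ) ^ (U ∩ I).card = (-1 : ℝ) ^ t := by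
      intro I hI
      rw [Finset.inter_comm, (Finset.mem_filter.1 hI).2]
    rw [Finset.sum_congr rfl this, Finset.sum_const, fiber_card_aux S U hU nj t ht',
      ← Finset.card_sdiff_of_subset hU]
    push_cast
    ring
  · intro I hI
    rw [Finset.mem_powersetCard] at hI
    rw [Finset.mem_range, Nat.lt_succ_iff, ← hI.2]
    exact Finset.card_le_card Finset.inter_subset_left

/-- The average over all subsets `I ⊆ J \ Ĩ` of size `n_j` of `∏_{i ∈ I} cos(2jπξ_i)`
equals
`∑_{U ⊆ J \ Ĩ} kr_{n_j}^{(|J \ Ĩ|)}(|U|) · ∏_{i ∈ (J\Ĩ)\U} cos²(jπξ_i) · ∏_{i ∈ U} sin²(jπξ_i)`. -/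
theorem avg_cos_eq_krawtchouk_sum {α : Type*} [DecidableEq α]
    (J Itilde : Finset α) (hI : Itilde ⊆ J) (j nj : ℕ)
    (hn : nj ≤ (J \ Itilde).card) (ξ : α → ℝ) :
    (1 / ((J \ Itilde).card.choose nj : ℝ)) *
      ∑ I ∈ Finset.powersetCard nj (J \ Itilde), ∏ i ∈ I, Real.cos (2 * j * π * ξ i)
    = ∑ U ∈ (J \ Itilde).powerset,
        kr ((J \ Itilde).card) nj U.card *
          ((∏ i ∈ (J \ Itilde) \ U, Real.cos (j * π * ξ i) ^ 2) *
            ∏ i ∈ U, Real.sin (j * π * ξ i) ^ 2) := by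
  set S : Finset α := J \ Itilde with hS
  -- expand each product using cos(2θ) = cos²θ - sin²θ and 1 = sin²+cos²
  have key : ∀ I ∈ Finset.powersetCard nj S,
      ∏ i ∈ I, Real.cos (2 * j * π * ξ i)
        = ∑ U ∈ S.powerset, (-1 : ℝ) ^ (U ∩ I).card *
            ((∏ i ∈ U, Real.sin (j * π * ξ i) ^ 2) *
              ∏ i ∈ S \ U, Real.cos (j * π * ξ i) ^ 2) := by
    intro I hIm
    rw [Finset.mem_powersetCard] at hIm
    have step1 : ∏ i ∈ I, Real.cos (2 * j * π * ξ i)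
        = ∏ i ∈ S, ((if i ∈ I then (-1 : ℝ) else 1) * Real.sin (j * π * ξ i) ^ 2
            + Real.cos (j * π * ξ i) ^ 2) := by
      rw [show (∏ i ∈ S, ((if i ∈ I then (-1 : ℝ) else 1) * Real.sin (j * π * ξ i) ^ 2
            + Real.cos (j * π * ξ i) ^ 2))
          = ∏ i ∈ S, (if i ∈ I then Real.cos (2 * j * π * ξ i) else 1) from
        Finset.prod_congr rfl fun i _ => by
          by_cases h : i ∈ I <;> simp only [h, if_true, if_false]
          · rw [neg_one_mul, show 2 * (j : ℝ) * π * ξ i = 2 * (j * π * ξ i) by ring,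
              Real.cos_two_mul']
            ring
          · rw [one_mul, Real.sin_sq_add_cos_sq]]
      rw [Finset.prod_ite_mem, Finset.inter_eq_right.2 hIm.1]
    rw [step1, Finset.prod_add]
    refine Finset.sum_congr rfl fun U hU => ?_
    rw [Finset.prod_mul_distrib]
    have : (∏ i ∈ U, (if i ∈ I then (-1 : ℝ) else 1)) = (-1 : ℝ) ^ (U ∩ I).card := by
      rw [Finset.prod_ite_mem U I (fun _ => (-1 : ℝ)), Finset.prod_const]
    rw [this]
    ring
  rw [Finset.sum_congr rfl key, Finset.sum_comm]
  rw [Finset.mul_sum]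
  refine Finset.sum_congr rfl fun U hU => ?_
  have hUS : U ⊆ S := Finset.mem_powerset.1 hU
  rw [← Finset.sum_mul, sum_sign_aux S U hUS nj]
  rw [kr]
  ring
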